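/- Secrecy is not monotone: there exists a simplicial secrecy model, a facet X, and formulas φ, ψ with φ → ψ valid such that S_aφ holds at X but S_aψ fails at X. -/

import Mathlib

/-!
Secrecy neighbourhoods need not be closed under supersets. Take one agent and two worlds,
`p` true only in the first, `r` only in the second, and let the truth set of `p` be the only
designated neighbourhood. Then `S p` holds in the first world, while the truth set of `p ∨ r`
is strictly larger and hence not designated, so `S (p ∨ r)` fails there. With a single agent
the frame condition (SN) holds vacuously.
-/

/-- Formulas of the epistemic-secrecy language: atoms, ¬, ∧, K_a, S_a. -/
inductive Form (A P : Type) : Type where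
  | atom : P → Form A P
  | neg : Form A P → Form A P
  | and : Form A P → Form A P → Form A P
  | K : A → Form A P → Form A P
  | S : A → Form A P → Form A P

/-- A simplicial secrecy model over agents `A` and propositional variables `P`:
an `A`-chromatic simplicial epistemic model (vertices `V`, downward-closed family of
non-empty finite faces `F`, colouring `χ` injective on faces, every facet containing
all colours, every vertex lying in a facet, valuation `ν` on facets) enriched with
secrecy neighborhood functions `N` attached to vertices (local states).
`va a X` is the unique vertex of colour `a` in a facet `X`. -/
structure SSModel (A P : Type) where
  V : Type
  F : Set (Finset V)
  F_nonempty : F.Nonempty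
  faces_nonempty : ∀ X ∈ F, X.Nonempty
  down_closed : ∀ X ∈ F, ∀ Y : Finset V, Y.Nonempty → Y ⊆ X → Y ∈ F
  χ : V → A
  chromatic : ∀ X ∈ F, Set.InjOn χ (X : Set V)
  va : A → Finset V → V
  va_spec : ∀ X ∈ F, (∀ Y ∈ F, X ⊆ Y → X = Y) → ∀ a : A, va a X ∈ X ∧ χ (va a X) = a
  facet_all_colours : ∀ X ∈ F, (∀ Y ∈ F, X ⊆ Y → X = Y) → ∀ a : A, ∃ v ∈ X, χ v = a
  vertex_cover : ∀ v : V, ∃ X ∈ F, (∀ Y ∈ F, X ⊆ Y → X = Y) ∧ v ∈ X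
  ν : Finset V → P → Prop
  N : V → Set (Set (Finset V))

namespace SSModel

variable {A P : Type}

/-- A facet is a maximal face. -/
def IsFacet (M : SSModel A P) (X : Finset M.V) : Prop :=
  X ∈ M.F ∧ ∀ Y ∈ M.F, X ⊆ Y → X = Y

/-- The star of a vertex: the set of facets containing it. -/
def St (M : SSModel A P) (v : M.V) : Set (Finset M.V) :=
  {X | M.IsFacet X ∧ v ∈ X}

/-- Truth at a facet. `X ~_a Y` iff `va a X = va a Y`.  `S a φ` holds iff `K a φ` holds
and the truth set of `φ` is a designated secrecy neighborhood at the owner's `a`-vertex. -/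
def Sat (M : SSModel A P) : Form A P → Finset M.V → Prop
  | Form.atom p, X => M.ν X p
  | Form.neg φ, X => ¬ M.Sat φ X
  | Form.and φ ψ, X => M.Sat φ X ∧ M.Sat ψ X
  | Form.K a φ, X => ∀ Y, M.IsFacet Y → M.va a X = M.va a Y → M.Sat φ Y
  | Form.S a φ, X =>
      (∀ Y, M.IsFacet Y → M.va a X = M.va a Y → M.Sat φ Y) ∧
      {Y : Finset M.V | M.IsFacet Y ∧ M.Sat φ Y} ∈ M.N (M.va a X)

/-- Frame condition (SN), external uncertainty: every designated secrecy event at an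
`a`-coloured local state `v` leaves every other agent `b` with an indistinguishable
facet outside the event, from every facet in the star of `v`. -/
def SN (M : SSModel A P) : Prop :=
  ∀ v : M.V, ∀ U ∈ M.N v, ∀ X : Finset M.V, M.IsFacet X → v ∈ X →
    ∀ b : A, b ≠ M.χ v → ∃ Y : Finset M.V, M.IsFacet Y ∧ M.va b X = M.va b Y ∧ Y ∉ U

end SSModel

namespace Form

variable {A P : Type}

def or (φ ψ : Form A P) : Form A P := neg (and (neg φ) (neg ψ))

end Form

namespace SSModel

variable {A P : Type}

def truthSet (M : SSModel A P) (φ : Form A P) : Set (Finset M.V) :=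
  {Y | M.IsFacet Y ∧ M.Sat φ Y}

theorem sat_or {M : SSModel A P} {φ ψ : Form A P} {X : Finset M.V} :
    M.Sat (φ.or ψ) X ↔ M.Sat φ X ∨ M.Sat ψ X := by
  simp only [Form.or, Sat]
  tauto

theorem sat_S_iff {M : SSModel A P} {a : A} {φ : Form A P} {X : Finset M.V} :
    M.Sat (.S a φ) X ↔ M.Sat (.K a φ) X ∧ M.truthSet φ ∈ M.N (M.va a X) :=
  Iff.rfl

theorem sn_of_subsingleton [Subsingleton A] (M : SSModel A P) : M.SN :=
  fun _ _ _ _ _ _ _ hb => absurd (Subsingleton.elim _ _) hb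

/-- Every vertex is a whole world: the facets are the singletons, and the single agent always
knows which world it is in. -/
noncomputable abbrev discrete (V : Type) [Nonempty V] (ν : Finset V → P → Prop)
    (N : V → Set (Set (Finset V))) : SSModel Unit P where
  V := V
  F := {X | ∃ v, X = {v}}
  F_nonempty := ⟨{Classical.arbitrary V}, _, rfl⟩
  faces_nonempty := by
    rintro _ ⟨v, rfl⟩
    exact Finset.singleton_nonempty v
  down_closed := by
    rintro _ ⟨v, rfl⟩ Y hY hYv
    exact ⟨v, (Finset.Nonempty.subset_singleton_iff hY).1 hYv⟩
  χ := fun _ => ()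
  chromatic := by
    rintro _ ⟨v, rfl⟩
    simp
  va := fun _ X => Classical.epsilon (· ∈ X)
  va_spec := by
    rintro _ ⟨v, rfl⟩ - -
    exact ⟨Classical.epsilon_spec ⟨v, Finset.mem_singleton_self v⟩, rfl⟩
  facet_all_colours := by
    rintro _ ⟨v, rfl⟩ - -
    exact ⟨v, Finset.mem_singleton_self v, rfl⟩
  vertex_cover := by
    intro v
    refine ⟨{v}, ⟨v, rfl⟩, ?_, Finset.mem_singleton_self v⟩
    rintro _ ⟨w, rfl⟩ hvw
    rw [Finset.singleton_subset_singleton.1 hvw]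
  ν := ν
  N := N

section discrete

variable {V : Type} [Nonempty V] {ν : Finset V → P → Prop} {N : V → Set (Set (Finset V))}

theorem discrete_isFacet_iff {X : Finset V} :
    (discrete V ν N).IsFacet X ↔ ∃ v, X = {v} := by
  refine ⟨And.left, ?_⟩
  rintro ⟨v, rfl⟩
  refine ⟨⟨v, rfl⟩, ?_⟩
  rintro _ ⟨w, rfl⟩ hvw
  rw [Finset.singleton_subset_singleton.1 hvw]

theorem discrete_va_singleton (a : Unit) (v : V) : (discrete V ν N).va a {v} = v :=
  Finset.mem_singleton.1 (Classical.epsilon_spec ⟨v, Finset.mem_singleton_self v⟩)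

theorem discrete_sat_K_singleton {φ : Form Unit P} (a : Unit) (v : V) :
    (discrete V ν N).Sat (.K a φ) {v} ↔ (discrete V ν N).Sat φ {v} := by
  refine ⟨fun h => h {v} (discrete_isFacet_iff.2 ⟨v, rfl⟩) rfl, ?_⟩
  rintro hφ _ hY hva
  obtain ⟨w, rfl⟩ := discrete_isFacet_iff.1 hY
  rw [discrete_va_singleton, discrete_va_singleton] at hva
  rwa [← hva]

theorem mem_discrete_truthSet_singleton {φ : Form Unit P} {v : V} :
    ({v} : Finset V) ∈ (discrete V ν N).truthSet φ ↔ (discrete V ν N).Sat φ {v} :=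
  and_iff_right (discrete_isFacet_iff.2 ⟨v, rfl⟩)

end discrete

end SSModel

open SSModel

/-- Secrecy is not monotone: there are a simplicial secrecy model, a facet `X`, and
formulas `φ, ψ` such that `φ → ψ` is valid (on all simplicial secrecy models), `S_a φ`
holds at `X`, but `S_a ψ` fails at `X`. -/
theorem secrecy_not_monotone :
    ∃ (A P : Type) (M : SSModel A P) (a : A) (X : Finset M.V) (φ ψ : Form A P),
      M.SN ∧ M.IsFacet X ∧
      (∀ (M' : SSModel A P), M'.SN → ∀ Y : Finset M'.V, M'.IsFacet Y →
        M'.Sat φ Y → M'.Sat ψ Y) ∧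
      M.Sat (Form.S a φ) X ∧
      ¬ M.Sat (Form.S a ψ) X := by
  let M := discrete Bool (fun X p => p ∈ X) (fun _ => {{{true}}})
  have truthSet_p : M.truthSet (.atom true) = {{true}} := by
    ext Y
    refine ⟨fun ⟨hY, hp⟩ => ?_, fun hY => ?_⟩
    · obtain ⟨v, rfl⟩ := discrete_isFacet_iff.1 hY
      rw [Finset.mem_singleton.1 hp]
      rfl
    · rw [Set.mem_singleton_iff.1 hY]
      exact mem_discrete_truthSet_singleton.2 (Finset.mem_singleton_self true)
  have false_mem : {false} ∈ M.truthSet ((Form.atom true).or (.atom false)) :=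
    mem_discrete_truthSet_singleton.2 (sat_or.2 (Or.inr (Finset.mem_singleton_self false)))
  refine ⟨Unit, Bool, M, (), {true}, .atom true, (Form.atom true).or (.atom false),
    sn_of_subsingleton M, discrete_isFacet_iff.2 ⟨true, rfl⟩,
    fun _ _ _ _ h => sat_or.2 (Or.inl h),
    sat_S_iff.2 ⟨(discrete_sat_K_singleton () true).2 (Finset.mem_singleton_self true), ?_⟩,
    fun hS => ?_⟩
  · rw [truthSet_p]
    rfl
  · rw [Set.mem_singleton_iff.1 (sat_S_iff.1 hS).2] at false_mem
    simp at false_mem
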